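/- arXiv:1909.09217 — 3 statements merged into one kernel-verified Lean document; each statement's English description precedes it below -/
import Mathlib

section
/- Let n be a positive integer, A an integer, and a : {1,…,n} → ℤ with a(i) > 0 for all i and ∑_{i=1}^{n} a(i) = 2A. Then there exist h, v : {1,…,n} → {−1, 0, 1} with |h(i)| + |v(i)| ≤ 1 for all i, ∑_{i=1}^{n} h(i)·a(i) = A, and ∑_{i=1}^{n} v(i)·a(i) = A, if and only if there exists a subset S ⊆ {1,…,n} with ∑_{i∈S} a(i) = A. -/
/-!
A path of struts reaching `(A, A)` gains at most `a i` in `x + y` from strut `i`, and the total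
`∑ a i = 2A` is exactly what is needed; so every strut is used, with sign `+1`, either horizontally
or vertically. The horizontal struts then form a Partition half, and conversely a half `S` gives the
path that runs the struts of `S` horizontally and the others vertically.
-/

open Finset

variable {ι R : Type*}

theorem eq_of_le_of_sum_mul_eq [Ring R] [LinearOrder R] [IsStrictOrderedRing R]
    {s : Finset ι} {f g a : ι → R} (hfg : ∀ i ∈ s, f i ≤ g i) (ha : ∀ i ∈ s, 0 < a i)
    (hsum : ∑ i ∈ s, f i * a i = ∑ i ∈ s, g i * a i) : ∀ i ∈ s, f i = g i := by
  have hmul := (sum_eq_sum_iff_of_le fun i hi =>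
    mul_le_mul_of_nonneg_right (hfg i hi) (ha i hi).le).mp hsum
  exact fun i hi => mul_right_cancel₀ (ha i hi).ne' (hmul i hi)

theorem Int.eq_zero_or_eq_one_of_abs_add_abs_le_one {x y : ℤ} (hxy : |x| + |y| ≤ 1)
    (hsum : x + y = 1) : x = 0 ∨ x = 1 := by
  have := neg_abs_le x
  have := le_abs_self x
  have := neg_abs_le y
  have := le_abs_self y
  omega

theorem sum_mul_eq_sum_filter_eq_one [Semiring R] (s : Finset ι) {h : ι → R} (a : ι → R)
    (h01 : ∀ i, h i = 0 ∨ h i = 1) [DecidablePred (fun i => h i = 1)] :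
    ∑ i ∈ s, h i * a i = ∑ i ∈ s with h i = 1, a i := by
  rw [sum_filter]
  refine sum_congr rfl fun i _ => ?_
  by_cases hi : h i = 1
  · rw [if_pos hi, hi, one_mul]
  · rw [if_neg hi, (h01 i).resolve_right hi, zero_mul]

theorem stmt_3_general (n : ℕ) (A : ℤ) (a : Fin n → ℤ)
    (ha : ∀ i, 0 < a i) (hsum : ∑ i, a i = 2 * A) :
    (∃ h v : Fin n → ℤ,
      (∀ i, h i = -1 ∨ h i = 0 ∨ h i = 1) ∧
      (∀ i, v i = -1 ∨ v i = 0 ∨ v i = 1) ∧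
      (∀ i, |h i| + |v i| ≤ 1) ∧
      ∑ i, h i * a i = A ∧ ∑ i, v i * a i = A) ↔
    (∃ S : Finset (Fin n), ∑ i ∈ S, a i = A) := by
  constructor
  · rintro ⟨h, v, -, -, hhv, hH, hV⟩
    have hle i : h i + v i ≤ 1 := (add_le_add (le_abs_self _) (le_abs_self _)).trans (hhv i)
    have hsum' : ∑ i, (h i + v i) * a i = ∑ i, 1 * a i := by
      simp only [add_mul, sum_add_distrib, hH, hV, one_mul, hsum]
      ring
    have hone i : h i + v i = 1 :=
      eq_of_le_of_sum_mul_eq (fun i _ => hle i) (fun i _ => ha i) hsum' i (mem_univ i)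
    have h01 i := Int.eq_zero_or_eq_one_of_abs_add_abs_le_one (hhv i) (hone i)
    exact ⟨univ.filter (h · = 1), by rw [← sum_mul_eq_sum_filter_eq_one univ a h01, hH]⟩
  · rintro ⟨S, hS⟩
    let h : Fin n → ℤ := fun i => if i ∈ S then 1 else 0
    have hH : ∑ i, h i * a i = A := by simp [h, ite_mul, sum_ite_mem, hS]
    refine ⟨h, fun i => 1 - h i, fun i => ?_, fun i => ?_, fun i => ?_, hH, ?_⟩
    iterate 3 by_cases hi : i ∈ S <;> simp [h, hi]
    simp only [sub_mul, one_mul, sum_sub_distrib, hsum, hH]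
    ring

/-- Correctness of the Partition-to-DPC reduction: the point `(A,A)` can be
reached from `(0,0)` using each axis-aligned strut of length `a i` at most
once (with sign functions `h`, `v` for the horizontal and vertical
directions) iff the Partition instance `a` has a solution. -/
theorem stmt_3 (n : ℕ) (hn : 0 < n) (A : ℤ) (a : Fin n → ℤ)
    (ha : ∀ i, 0 < a i) (hsum : ∑ i, a i = 2 * A) :
    (∃ h v : Fin n → ℤ,
      (∀ i, h i = -1 ∨ h i = 0 ∨ h i = 1) ∧
      (∀ i, v i = -1 ∨ v i = 0 ∨ v i = 1) ∧
      (∀ i, |h i| + |v i| ≤ 1) ∧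
      ∑ i, h i * a i = A ∧ ∑ i, v i * a i = A) ↔
    (∃ S : Finset (Fin n), ∑ i ∈ S, a i = A) :=
  stmt_3_general n A a ha hsum
end

section
/- Let m, A be positive integers and a : {1,…,3m} → ℤ with 4·a(i) > A and 2·a(i) < A for all i and ∑_{i=1}^{3m} a(i) = m·A. Let π be a permutation of {1,…,3m}, let ε : {1,…,3m} → {−1,1}, let o : {1,…,3m} → {e₁, e₂}, and define steps v(i) := ε(i)·a(π(i))·o(i) ∈ ℤ². Let d : {1,…,m} → {e₁, −e₁, e₂, −e₂} and suppose there exist indices 0 = k₀ ≤ k₁ ≤ ⋯ ≤ k_m = 3m such that ∑_{k_{j−1} < i ≤ k_j} v(i) = A·d(j) for every j ∈ {1,…,m}. Then k_j = 3·j for all j, and for every j and every i with k_{j−1} < i ≤ k_j one has v(i) = a(π(i))·d(j); in particular, for each j the three values a(π(i)) with 3(j−1) < i ≤ 3j sum to A, so the sets I_j := {π(i) : 3(j−1) < i ≤ 3j} form a 3-Partition solution. -/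
/-!
Project each block onto its direction `d`: a strut of length `a` contributes `a`, `-a` or `0`,
and never more than `a`. As two struts are shorter than `A`, a block whose projection is `A`
needs at least three struts; with `m` blocks and `3m` struts every block has exactly three.
Then each of them must contribute its full length, i.e. point along `d`, since the other two
cannot reach `A` on their own.
-/

open Finset

def finIco (n p q : ℕ) : Finset (Fin n) :=
  univ.filter fun i : Fin n => p ≤ (i : ℕ) ∧ (i : ℕ) < q

@[simp]
lemma mem_finIco {n p q : ℕ} {i : Fin n} : i ∈ finIco n p q ↔ p ≤ (i : ℕ) ∧ (i : ℕ) < q := by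
  simp [finIco]

lemma card_finIco {n p q : ℕ} (hq : q ≤ n) : (finIco n p q).card = q - p := by
  have : finIco n p q = (Ico p q).attachFin fun x hx => (mem_Ico.mp hx).2.trans_le hq := by
    ext i
    simp
  rw [this, card_attachFin, Nat.card_Ico]

lemma mem_finIco_mul_iff {n c j : ℕ} (hc : 0 < c) {i : Fin n} :
    i ∈ finIco n (c * j) (c * j + c) ↔ (i : ℕ) / c = j := by
  rw [mem_finIco, Nat.div_eq_iff hc, mul_comm j]
  omega

lemma pairwise_disjoint_image_finIco_mul {m c : ℕ} (hc : 0 < c) (π : Equiv.Perm (Fin (c * m)))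
    {j j' : ℕ} (hjj' : j ≠ j') :
    Disjoint ((finIco (c * m) (c * j) (c * j + c)).image π)
      ((finIco (c * m) (c * j') (c * j' + c)).image π) := by
  rw [disjoint_image π.injective, disjoint_left]
  intro i hi hi'
  rw [mem_finIco_mul_iff hc] at hi hi'
  exact hjj' (hi.symm.trans hi')

lemma biUnion_image_finIco_mul {m c : ℕ} (hc : 0 < c) (π : Equiv.Perm (Fin (c * m))) :
    (univ : Finset (Fin m)).biUnion (fun j => (finIco (c * m) (c * j) (c * j + c)).image π)
      = univ := by
  refine eq_univ_of_forall fun x => mem_biUnion.mpr ?_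
  have hx : (π.symm x : ℕ) / c < m := Nat.div_lt_of_lt_mul (π.symm x).isLt
  refine ⟨⟨_, hx⟩, mem_univ _, mem_image.mpr ⟨π.symm x, ?_, π.apply_symm_apply x⟩⟩
  exact (mem_finIco_mul_iff hc).mpr rfl

section

variable {ι : Type*} {A : ℤ} {b c : ι → ℤ}

lemma two_mul_sum_lt_card_mul {T : Finset ι} (hT : T.Nonempty) (hbA : ∀ i ∈ T, 2 * b i < A) :
    2 * ∑ i ∈ T, b i < T.card * A := by
  rw [mul_sum, ← nsmul_eq_mul, ← sum_const]
  exact sum_lt_sum_of_nonempty hT hbA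

variable {S : Finset ι} (hbA : ∀ i ∈ S, 2 * b i < A) (hcb : ∀ i ∈ S, c i ≤ b i)
  (hsum : ∑ i ∈ S, c i = A)
include hbA hcb hsum

lemma three_le_card_of_sum_eq (hA : 0 < A) : 3 ≤ S.card := by
  have hS : S.Nonempty := nonempty_of_sum_ne_zero (hsum ▸ hA.ne')
  have hAb : A ≤ ∑ i ∈ S, b i := hsum ▸ sum_le_sum hcb
  have := two_mul_sum_lt_card_mul hS hbA
  by_contra! h
  interval_cases S.card <;> push_cast at this <;> linarith

lemma eq_of_sum_eq_of_card_eq_three [DecidableEq ι] (hc : ∀ i ∈ S, c i = b i ∨ c i ≤ 0)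
    (h3 : S.card = 3) : ∀ i ∈ S, c i = b i := by
  intro i hi
  refine (hc i hi).resolve_right fun hci => ?_
  have hcard : (S.erase i).card = 2 := by rw [card_erase_of_mem hi, h3]
  have hAb : A ≤ ∑ j ∈ S.erase i, b j := by
    have := sum_le_sum fun j (hj : j ∈ S.erase i) => hcb j (mem_of_mem_erase hj)
    rw [← add_sum_erase S c hi] at hsum
    linarith
  have := two_mul_sum_lt_card_mul (card_pos.mp (hcard ▸ two_pos))
    fun j hj => hbA j (mem_of_mem_erase hj)
  rw [hcard, Nat.cast_two] at this
  linarith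

end

lemma add_mul_sub_le_of_add_le_succ {m c : ℕ} {k : Fin (m + 1) → ℕ}
    (hgap : ∀ j : Fin m, k j.castSucc + c ≤ k j.succ) {i j : Fin (m + 1)} (hij : i ≤ j) :
    k i + c * (j - i) ≤ k j := by
  induction j using Fin.induction with
  | zero => simp [Fin.le_zero_iff.mp hij]
  | succ j ih =>
    rcases hij.lt_or_eq with hlt | rfl
    · have hle : (i : ℕ) ≤ j := Nat.lt_succ_iff.mp hlt
      have := ih (Fin.le_castSucc_iff.mpr hlt)
      rw [Fin.val_succ, Nat.sub_add_comm hle, mul_add_one]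
      rw [Fin.val_castSucc] at this
      linarith [hgap j]
    · simp

lemma eq_mul_val_of_add_le_succ {m c : ℕ} {k : Fin (m + 1) → ℕ} (h0 : k 0 = 0)
    (hlast : k (Fin.last m) = c * m) (hgap : ∀ j : Fin m, k j.castSucc + c ≤ k j.succ)
    (j : Fin (m + 1)) : k j = c * j := by
  have hlow := add_mul_sub_le_of_add_le_succ hgap (Fin.zero_le j)
  have hhigh := add_mul_sub_le_of_add_le_succ hgap (Fin.le_last j)
  rw [h0, Fin.val_zero, Nat.sub_zero, zero_add] at hlow
  rw [hlast, Fin.val_last, Nat.mul_sub] at hhigh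
  have := Nat.mul_le_mul_left c (Fin.is_le j)
  omega

def IsAxisUnit (d : ℤ × ℤ) : Prop :=
  d = (1, 0) ∨ d = (-1, 0) ∨ d = (0, 1) ∨ d = (0, -1)

lemma isAxisUnit_smul {s : ℤ} {o : ℤ × ℤ} (hs : s = 1 ∨ s = -1) (ho : o = (1, 0) ∨ o = (0, 1)) :
    IsAxisUnit (s • o) := by
  rcases hs with rfl | rfl <;> rcases ho with rfl | rfl <;> simp [IsAxisUnit]

def dotWith (d : ℤ × ℤ) : ℤ × ℤ →+ ℤ where
  toFun x := x.1 * d.1 + x.2 * d.2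
  map_zero' := by simp
  map_add' x y := by simp only [Prod.fst_add, Prod.snd_add]; ring

namespace IsAxisUnit

variable {d u : ℤ × ℤ}

lemma dotWith_self (hd : IsAxisUnit d) : dotWith d d = 1 := by
  rcases hd with rfl | rfl | rfl | rfl <;> rfl

lemma eq_or_dotWith_nonpos (hd : IsAxisUnit d) (hu : IsAxisUnit u) : u = d ∨ dotWith d u ≤ 0 := by
  rcases hd with rfl | rfl | rfl | rfl <;> rcases hu with rfl | rfl | rfl | rfl <;> decide

lemma dotWith_smul_eq_or_nonpos (hd : IsAxisUnit d) (hu : IsAxisUnit u) {t : ℤ} (ht : 0 ≤ t) :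
    dotWith d (t • u) = t ∨ dotWith d (t • u) ≤ 0 := by
  rw [map_zsmul, smul_eq_mul]
  rcases hd.eq_or_dotWith_nonpos hu with rfl | h
  · rw [hd.dotWith_self, mul_one]; exact Or.inl rfl
  · exact Or.inr (mul_nonpos_of_nonneg_of_nonpos ht h)

lemma dotWith_smul_le (hd : IsAxisUnit d) (hu : IsAxisUnit u) {t : ℤ} (ht : 0 ≤ t) :
    dotWith d (t • u) ≤ t :=
  (hd.dotWith_smul_eq_or_nonpos hu ht).elim le_of_eq fun h => h.trans ht

end IsAxisUnit

section AxisPath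

variable {ι : Type*} {S : Finset ι} {A : ℤ} {b : ι → ℤ} {u : ι → ℤ × ℤ} {d : ℤ × ℤ}

lemma sum_dotWith_smul_eq (hd : IsAxisUnit d) (hsum : ∑ i ∈ S, b i • u i = A • d) :
    ∑ i ∈ S, dotWith d (b i • u i) = A := by
  rw [← map_sum, hsum, map_zsmul, hd.dotWith_self, smul_eq_mul, mul_one]

lemma three_le_card_of_sum_smul_eq (hA : 0 < A) (hb : ∀ i ∈ S, 0 ≤ b i)
    (hbA : ∀ i ∈ S, 2 * b i < A) (hu : ∀ i ∈ S, IsAxisUnit (u i)) (hd : IsAxisUnit d)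
    (hsum : ∑ i ∈ S, b i • u i = A • d) : 3 ≤ S.card :=
  three_le_card_of_sum_eq hbA
    (fun i hi => hd.dotWith_smul_le (hu i hi) (hb i hi))
    (sum_dotWith_smul_eq hd hsum) hA

variable [DecidableEq ι] (hb : ∀ i ∈ S, 0 < b i) (hbA : ∀ i ∈ S, 2 * b i < A)
  (hu : ∀ i ∈ S, IsAxisUnit (u i)) (hd : IsAxisUnit d) (hsum : ∑ i ∈ S, b i • u i = A • d)
  (h3 : S.card = 3)
include hb hbA hu hd hsum h3

lemma dotWith_smul_eq_of_card_eq_three : ∀ i ∈ S, dotWith d (b i • u i) = b i :=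
  eq_of_sum_eq_of_card_eq_three hbA (fun i hi => hd.dotWith_smul_le (hu i hi) (hb i hi).le)
    (sum_dotWith_smul_eq hd hsum) (fun i hi => hd.dotWith_smul_eq_or_nonpos (hu i hi) (hb i hi).le)
    h3

lemma forall_eq_and_sum_eq_of_card_eq_three : (∀ i ∈ S, u i = d) ∧ ∑ i ∈ S, b i = A := by
  have hdot := dotWith_smul_eq_of_card_eq_three hb hbA hu hd hsum h3
  refine ⟨fun i hi => (hd.eq_or_dotWith_nonpos (hu i hi)).resolve_right fun h => ?_, ?_⟩
  · have := hdot i hi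
    rw [map_zsmul, smul_eq_mul] at this
    nlinarith [hb i hi]
  · rw [← sum_dotWith_smul_eq hd hsum]
    exact (sum_congr rfl hdot).symm

end AxisPath

theorem stmt_4_general (m : ℕ) (A : ℤ) (hA : 0 < A)
    (a : Fin (3 * m) → ℤ)
    (h4 : ∀ i, 4 * a i > A) (h2 : ∀ i, 2 * a i < A)
    (π : Equiv.Perm (Fin (3 * m)))
    (ε : Fin (3 * m) → ℤ) (hε : ∀ i, ε i = 1 ∨ ε i = -1)
    (o : Fin (3 * m) → ℤ × ℤ) (ho : ∀ i, o i = (1, 0) ∨ o i = (0, 1))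
    (v : Fin (3 * m) → ℤ × ℤ) (hv : ∀ i, v i = (ε i * a (π i)) • o i)
    (d : Fin m → ℤ × ℤ)
    (hd : ∀ j, d j = (1, 0) ∨ d j = (-1, 0) ∨ d j = (0, 1) ∨ d j = (0, -1))
    (k : Fin (m + 1) → ℕ) (hk0 : k 0 = 0) (hmono : Monotone k)
    (hkm : k (Fin.last m) = 3 * m)
    (hblock : ∀ j : Fin m,
      ∑ i ∈ Finset.univ.filter
          (fun i : Fin (3 * m) => k j.castSucc ≤ (i : ℕ) ∧ (i : ℕ) < k j.succ), v i
        = A • d j) :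
    (∀ j : Fin (m + 1), k j = 3 * (j : ℕ)) ∧
    (∀ j : Fin m, ∀ i : Fin (3 * m),
      k j.castSucc ≤ (i : ℕ) → (i : ℕ) < k j.succ → v i = a (π i) • d j) ∧
    (∀ I : Fin m → Finset (Fin (3 * m)),
      (∀ j, I j = (Finset.univ.filter
          (fun i : Fin (3 * m) => 3 * (j : ℕ) ≤ (i : ℕ) ∧ (i : ℕ) < 3 * (j : ℕ) + 3)).image
            (fun i => π i)) →
      (∀ j, (I j).card = 3 ∧ ∑ l ∈ I j, a l = A) ∧
      (∀ j j', j ≠ j' → Disjoint (I j) (I j')) ∧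
      Finset.univ.biUnion I = Finset.univ) := by
  have ha i : 0 < a (π i) := by linarith [h4 (π i)]
  have hu i : IsAxisUnit (ε i • o i) := isAxisUnit_smul (hε i) (ho i)
  have hv' i : v i = a (π i) • (ε i • o i) := by rw [hv, mul_comm, mul_smul]
  have hpath j :
      ∑ i ∈ finIco (3 * m) (k j.castSucc) (k j.succ), a (π i) • (ε i • o i) = A • d j := by
    rw [← hblock j]
    exact sum_congr rfl fun i _ => (hv' i).symm
  have hk : ∀ j, k j = 3 * (j : ℕ) := eq_mul_val_of_add_le_succ hk0 hkm fun j => by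
    have h3 := three_le_card_of_sum_smul_eq hA (fun i _ => (ha i).le) (fun i _ => h2 (π i))
      (fun i _ => hu i) (hd j) (hpath j)
    rw [card_finIco (hkm ▸ hmono (Fin.le_last _))] at h3
    omega
  have hseg (j : Fin m) :
      finIco (3 * m) (k j.castSucc) (k j.succ) = finIco (3 * m) (3 * j) (3 * j + 3) := by
    rw [hk, hk, Fin.val_succ, Fin.val_castSucc, mul_add_one]
  have hcard (j : Fin m) : (finIco (3 * m) (3 * j) (3 * j + 3)).card = 3 := by
    rw [card_finIco (by omega)]
    omega
  have hrigid j := forall_eq_and_sum_eq_of_card_eq_three (fun i _ => ha i) (fun i _ => h2 (π i))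
    (fun i _ => hu i) (hd j) (hseg j ▸ hpath j) (hcard j)
  refine ⟨hk, fun j i hi₁ hi₂ => ?_, fun I hI => ⟨fun j => ?_, fun j j' hjj' => ?_, ?_⟩⟩
  · rw [hv' i, (hrigid j).1 i (hseg j ▸ mem_finIco.mpr ⟨hi₁, hi₂⟩)]
  · rw [hI, card_image_of_injective _ π.injective, sum_image π.injective.injOn]
    exact ⟨hcard j, (hrigid j).2⟩
  · rw [hI, hI]
    exact pairwise_disjoint_image_finIco_mul three_pos π (Fin.val_injective.ne hjj')
  · obtain rfl : I = _ := funext hI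
    exact biUnion_image_finIco_mul three_pos π

/-- Core rigidity of the DPA-S hardness proof: if an axis-aligned path whose
steps are `v i = ε i · a (π i) · o i` (each strut length used exactly once,
orientation `o i ∈ {e₁, e₂}`, sign `ε i ∈ {±1}`) decomposes into `m`
consecutive blocks, delimited by `0 = k₀ ≤ k₁ ≤ ⋯ ≤ k_m = 3m`, whose net
displacements are `A • d j` with `d j ∈ {±e₁, ±e₂}`, then `k j = 3j`, every
step in block `j` equals `a (π i) • d j`, and the index images `I j` of the
blocks under `π` form a 3-Partition solution. (Steps are indexed 0-based:
block `j` consists of indices `i` with `k j ≤ i < k (j+1)`.) -/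
theorem stmt_4 (m : ℕ) (hm : 0 < m) (A : ℤ) (hA : 0 < A)
    (a : Fin (3 * m) → ℤ)
    (h4 : ∀ i, 4 * a i > A) (h2 : ∀ i, 2 * a i < A)
    (hsum : ∑ i, a i = (m : ℤ) * A)
    (π : Equiv.Perm (Fin (3 * m)))
    (ε : Fin (3 * m) → ℤ) (hε : ∀ i, ε i = 1 ∨ ε i = -1)
    (o : Fin (3 * m) → ℤ × ℤ) (ho : ∀ i, o i = (1, 0) ∨ o i = (0, 1))
    (v : Fin (3 * m) → ℤ × ℤ) (hv : ∀ i, v i = (ε i * a (π i)) • o i)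
    (d : Fin m → ℤ × ℤ)
    (hd : ∀ j, d j = (1, 0) ∨ d j = (-1, 0) ∨ d j = (0, 1) ∨ d j = (0, -1))
    (k : Fin (m + 1) → ℕ) (hk0 : k 0 = 0) (hmono : Monotone k)
    (hkm : k (Fin.last m) = 3 * m)
    (hblock : ∀ j : Fin m,
      ∑ i ∈ Finset.univ.filter
          (fun i : Fin (3 * m) => k j.castSucc ≤ (i : ℕ) ∧ (i : ℕ) < k j.succ), v i
        = A • d j) :
    (∀ j : Fin (m + 1), k j = 3 * (j : ℕ)) ∧
    (∀ j : Fin m, ∀ i : Fin (3 * m),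
      k j.castSucc ≤ (i : ℕ) → (i : ℕ) < k j.succ → v i = a (π i) • d j) ∧
    (∀ I : Fin m → Finset (Fin (3 * m)),
      (∀ j, I j = (Finset.univ.filter
          (fun i : Fin (3 * m) => 3 * (j : ℕ) ≤ (i : ℕ) ∧ (i : ℕ) < 3 * (j : ℕ) + 3)).image
            (fun i => π i)) →
      (∀ j, (I j).card = 3 ∧ ∑ l ∈ I j, a l = A) ∧
      (∀ j j', j ≠ j' → Disjoint (I j) (I j')) ∧
      Finset.univ.biUnion I = Finset.univ) :=
  stmt_4_general m A hA a h4 h2 π ε hε o ho v hv d hd k hk0 hmono hkm hblock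
end

section
/- Let m, A be positive integers and a : {1,…,3m} → ℤ with 4·a(i) > A and 2·a(i) < A for all i and ∑_{i=1}^{3m} a(i) = m·A. Let δ be a real number with 0 ≤ δ < 1/2 and set p_j := (⌊j/2⌋·A, (⌈j/2⌉ mod 2)·A) ∈ ℤ² for j = 0,…,m. The following are equivalent: (i) there exist a start point x ∈ ℝ², a permutation π of {1,…,3m}, signs ε : {1,…,3m} → {−1,1}, orientations o : {1,…,3m} → {e₁, e₂}, and indices 0 = k₀ ≤ k₁ ≤ ⋯ ≤ k_m = 3m such that, with steps v(i) := ε(i)·a(π(i))·o(i), one has ‖(x + ∑_{1 ≤ i ≤ k_j} v(i)) − p_j‖_∞ ≤ δ for every j ∈ {0,…,m}; (ii) {1,…,3m} can be partitioned into m three-element sets each with a-sum A. -/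
/-!
A path through the `δ`-boxes of the zigzag points is pinned to them exactly, since `δ < 1/2` and
the path has integer steps. Between consecutive turning points the path must then cover an edge of
length `A` in the `ℓ¹` norm, which costs at least `A` of total strut length; as the struts have
total length `m * A`, every edge uses exactly length `A`, and since every strut lies strictly
between `A/4` and `A/2`, exactly three struts. Conversely, laying out the triples of a
3-partition along the `m` edges of the zigzag gives a path through the points themselves.
-/

/-- Coercion of an integer point to the real plane (with the `ℓ∞` product norm). -/
noncomputable def toR : ℤ × ℤ → ℝ × ℝ := fun p => ((p.1 : ℝ), (p.2 : ℝ))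

open Finset

@[simp] lemma toR_sub (u v : ℤ × ℤ) : toR (u - v) = toR u - toR v := by
  simp [toR]

lemma eq_zero_of_norm_toR_lt_one {w : ℤ × ℤ} (h : ‖toR w‖ < 1) : w = 0 := by
  have h1 : |(w.1 : ℝ)| < 1 := (norm_fst_le (toR w)).trans_lt h
  have h2 : |(w.2 : ℝ)| < 1 := (norm_snd_le (toR w)).trans_lt h
  ext
  exacts [Int.abs_lt_one_iff.1 (by exact_mod_cast h1), Int.abs_lt_one_iff.1 (by exact_mod_cast h2)]

lemma eq_of_norm_add_toR_sub_toR_le {x : ℝ × ℝ} {δ : ℝ} {u v : ℤ × ℤ} (hδ : δ < 1 / 2)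
    (hx : ‖x‖ ≤ δ) (h : ‖x + toR u - toR v‖ ≤ δ) : u = v := by
  refine sub_eq_zero.1 (eq_zero_of_norm_toR_lt_one ?_)
  calc ‖toR (u - v)‖ = ‖(x + toR u - toR v) - x‖ := by rw [toR_sub]; abel_nf
    _ ≤ ‖x + toR u - toR v‖ + ‖x‖ := norm_sub_le _ _
    _ < 1 := by linarith

def zigzag (j : ℕ) : ℤ × ℤ :=
  (((j / 2 : ℕ) : ℤ), (((j + 1) / 2 % 2 : ℕ) : ℤ))

@[simp] lemma zigzag_zero : zigzag 0 = 0 := rfl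

lemma zigzag_succ_sub (j : ℕ) : ∃ (e : ℤ) (o : ℤ × ℤ), (e = 1 ∨ e = -1) ∧
    (o = (1, 0) ∨ o = (0, 1)) ∧ zigzag (j + 1) - zigzag j = e • o := by
  obtain ⟨t, rfl | rfl | rfl | rfl⟩ : ∃ t, j = 4 * t ∨ j = 4 * t + 1 ∨ j = 4 * t + 2 ∨
      j = 4 * t + 3 := ⟨j / 4, by omega⟩
  · exact ⟨1, (0, 1), by simp, by simp, by ext <;> simp [zigzag] <;> omega⟩
  · exact ⟨1, (1, 0), by simp, by simp, by ext <;> simp [zigzag] <;> omega⟩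
  · exact ⟨-1, (0, 1), by simp, by simp, by ext <;> simp [zigzag] <;> omega⟩
  · exact ⟨1, (1, 0), by simp, by simp, by ext <;> simp [zigzag] <;> omega⟩

lemma abs_fst_add_abs_snd_sum_smul_le {ι : Type*} (s : Finset ι) (c : ι → ℤ) {o : ι → ℤ × ℤ}
    (ho : ∀ i, o i = (1, 0) ∨ o i = (0, 1)) :
    |(∑ i ∈ s, c i • o i).1| + |(∑ i ∈ s, c i • o i).2| ≤ ∑ i ∈ s, |c i| := by
  calc |(∑ i ∈ s, c i • o i).1| + |(∑ i ∈ s, c i • o i).2|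
      ≤ ∑ i ∈ s, |(c i • o i).1| + ∑ i ∈ s, |(c i • o i).2| := by
        rw [Prod.fst_sum, Prod.snd_sum]
        exact add_le_add (abs_sum_le_sum_abs _ _) (abs_sum_le_sum_abs _ _)
    _ = ∑ i ∈ s, |c i| := by
        rw [← sum_add_distrib]
        refine sum_congr rfl fun i _ => ?_
        rcases ho i with h | h <;> simp [h]

lemma card_eq_three_of_sum_eq {ι : Type*} {s : Finset ι} {f : ι → ℤ} {A : ℤ} (hA : 0 < A)
    (h4 : ∀ i ∈ s, A < 4 * f i) (h2 : ∀ i ∈ s, 2 * f i < A) (hs : ∑ i ∈ s, f i = A) :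
    #s = 3 := by
  have hne : s.Nonempty := nonempty_of_sum_ne_zero (hs ▸ hA.ne')
  have hlt : #s * A < 4 * A := by
    simpa [← mul_sum, hs] using sum_lt_sum_of_nonempty hne h4
  have hgt : 2 * A < #s * A := by
    simpa [← mul_sum, hs] using sum_lt_sum_of_nonempty hne h2
  have := lt_of_mul_lt_mul_right hlt hA.le
  have := lt_of_mul_lt_mul_right hgt hA.le
  omega

section window

variable {n m : ℕ} {k : Fin (m + 1) → ℕ}

def window (k : Fin (m + 1) → ℕ) (j : Fin m) : Finset (Fin n) :=
  univ.filter (fun i : Fin n => (i : ℕ) < k j.succ) \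
    univ.filter (fun i : Fin n => (i : ℕ) < k j.castSucc)

@[simp] lemma mem_window {j : Fin m} {i : Fin n} :
    i ∈ window k j ↔ k j.castSucc ≤ i ∧ (i : ℕ) < k j.succ := by
  simp only [window, mem_sdiff, mem_filter, mem_univ, true_and, not_lt]
  exact and_comm

lemma filter_lt_subset_of_monotone (hk : Monotone k) (j : Fin m) :
    univ.filter (fun i : Fin n => (i : ℕ) < k j.castSucc) ⊆
      univ.filter (fun i : Fin n => (i : ℕ) < k j.succ) :=
  fun _ => by
    simp only [mem_filter, mem_univ, true_and]
    exact fun h => h.trans_le (hk j.castSucc_le_succ)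

lemma sum_window {M : Type*} [AddCommGroup M] (hk : Monotone k) (F : Fin n → M) (j : Fin m) :
    ∑ i ∈ window k j, F i =
      ∑ i ∈ univ.filter (fun i : Fin n => (i : ℕ) < k j.succ), F i -
        ∑ i ∈ univ.filter (fun i : Fin n => (i : ℕ) < k j.castSucc), F i :=
  eq_sub_of_add_eq (sum_sdiff (filter_lt_subset_of_monotone hk j))

lemma card_window (hk : Monotone k) (j : Fin m) :
    #(window k j : Finset (Fin n)) = min n (k j.succ) - min n (k j.castSucc) := by
  rw [window, card_sdiff_of_subset (filter_lt_subset_of_monotone hk j), Fin.card_filter_val_lt,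
    Fin.card_filter_val_lt]

lemma window_pairwiseDisjoint (hk : Monotone k) :
    Pairwise fun u w => Disjoint (window k u : Finset (Fin n)) (window k w) := by
  have key : ∀ u w : Fin m, u < w → Disjoint (window k u : Finset (Fin n)) (window k w) := by
    intro u w huw
    have : k u.succ ≤ k w.castSucc := hk (Fin.succ_le_castSucc_iff.2 huw)
    exact disjoint_left.2 fun i hu hw => by simp only [mem_window] at hu hw; omega
  intro u w huw
  rcases lt_or_gt_of_ne huw with h | h
  exacts [key u w h, (key w u h).symm]

lemma exists_mem_window (hk0 : k 0 = 0) (hkn : n ≤ k (Fin.last m)) (i : Fin n) :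
    ∃ j, i ∈ window k j := by
  by_contra! hi
  have : ∀ j : Fin (m + 1), k j ≤ i := by
    refine Fin.induction (by simp [hk0]) fun j hj => ?_
    by_contra! h
    exact hi j (mem_window.2 ⟨hj, h⟩)
  have := this (Fin.last m)
  omega

lemma sum_filter_lt_eq_of_sum_window {M : Type*} [AddCommGroup M] (hk : Monotone k)
    (F : Fin n → M) {q : Fin (m + 1) → M}
    (h0 : ∑ i ∈ univ.filter (fun i : Fin n => (i : ℕ) < k 0), F i = q 0)
    (hstep : ∀ j, ∑ i ∈ window k j, F i = q j.succ - q j.castSucc) (j : Fin (m + 1)) :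
    ∑ i ∈ univ.filter (fun i : Fin n => (i : ℕ) < k j), F i = q j := by
  induction j using Fin.induction with
  | zero => exact h0
  | succ j ih =>
    have h := sum_window hk F j
    rw [hstep, ih] at h
    exact (sub_left_inj.1 h).symm

end window

lemma exists_finpartition_of_cover {α ι : Type*} [Fintype α] [DecidableEq α] [Fintype ι]
    (t : ι → Finset α) (hdisj : Pairwise fun u w => Disjoint (t u) (t w))
    (hne : ∀ j, (t j).Nonempty) (hcov : ∀ a, ∃ j, a ∈ t j) :
    ∃ P : Finpartition (univ : Finset α),
      #P.parts = Fintype.card ι ∧ ∀ q ∈ P.parts, ∃ j, q = t j := by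
  classical
  have hinj : Function.Injective t := fun u w h => by
    by_contra huw
    have hd : Disjoint (t u) (t w) := hdisj huw
    exact (hne w).ne_empty (disjoint_self.1 (h ▸ hd))
  refine ⟨Finpartition.ofExistsUnique (univ.image t) (fun _ _ => subset_univ _) ?_ ?_, ?_, ?_⟩
  · intro a _
    obtain ⟨j, hj⟩ := hcov a
    refine ⟨t j, ⟨mem_image_of_mem t (mem_univ j), hj⟩, ?_⟩
    rintro _ ⟨hq, ha⟩
    obtain ⟨w, -, rfl⟩ := mem_image.1 hq
    by_contra h
    exact disjoint_left.1 (hdisj fun hwj : w = j => h (congrArg t hwj)) ha hj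
  · simpa [eq_comm] using fun j => (hne j).ne_empty
  · simp [card_image_of_injective _ hinj]
  · simp [eq_comm]

lemma Finpartition.exists_fiber_mem_parts {α : Type*} [Fintype α] [DecidableEq α] {m : ℕ}
    (P : Finpartition (univ : Finset α)) (hP : #P.parts = m) :
    ∃ c : α → Fin m, ∀ j, univ.filter (fun i => c i = j) ∈ P.parts := by
  let e : P.parts ≃ Fin m := P.parts.equivFin.trans (finCongr hP)
  refine ⟨fun i => e ⟨P.part i, P.part_mem.2 (mem_univ i)⟩, fun j => ?_⟩
  convert (e.symm j).2 using 1
  ext i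
  simp only [mem_filter, mem_univ, true_and, ← e.eq_symm_apply, Subtype.ext_iff]
  exact P.part_eq_iff_mem (e.symm j).2

lemma exists_perm_comp_eq_of_card_fiber {α γ : Type*} [Fintype α] [DecidableEq γ] {f g : α → γ}
    (h : ∀ c, #(univ.filter fun a => f a = c) = #(univ.filter fun a => g a = c)) :
    ∃ π : Equiv.Perm α, ∀ a, g (π a) = f a :=
  ⟨Equiv.ofFiberEquiv fun c => Fintype.equivOfCardEq (by simpa [Fintype.card_subtype] using h c),
    Equiv.ofFiberEquiv_map _⟩

lemma sum_filter_lt_eq_of_norm_le {n m : ℕ} {F : Fin n → ℤ × ℤ} {q : Fin (m + 1) → ℤ × ℤ}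
    {k : Fin (m + 1) → ℕ} {x : ℝ × ℝ} {δ : ℝ} (hδ : δ < 1 / 2) (hk0 : k 0 = 0) (hq0 : q 0 = 0)
    (hbox : ∀ j,
      ‖x + toR (∑ i ∈ univ.filter (fun i : Fin n => (i : ℕ) < k j), F i) - toR (q j)‖ ≤ δ)
    (j : Fin (m + 1)) :
    ∑ i ∈ univ.filter (fun i : Fin n => (i : ℕ) < k j), F i = q j := by
  have hx : ‖x‖ ≤ δ := by simpa [hk0, hq0] using hbox 0
  exact eq_of_norm_add_toR_sub_toR_le hδ hx (hbox j)

section reduction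

variable {m : ℕ} {A : ℤ} {a : Fin (3 * m) → ℤ}

lemma le_sum_window_of_sum_filter_lt_eq_zigzag (hA : 0 < A) (hapos : ∀ i, 0 < a i)
    {π : Equiv.Perm (Fin (3 * m))} {ε : Fin (3 * m) → ℤ} {o : Fin (3 * m) → ℤ × ℤ}
    {k : Fin (m + 1) → ℕ} (hε : ∀ i, ε i = 1 ∨ ε i = -1) (ho : ∀ i, o i = (1, 0) ∨ o i = (0, 1))
    (hk : Monotone k)
    (hhit : ∀ j : Fin (m + 1), ∑ i ∈ univ.filter (fun i : Fin (3 * m) => (i : ℕ) < k j),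
      (ε i * a (π i)) • o i = A • zigzag j)
    (j : Fin m) :
    A ≤ ∑ i ∈ window k j, a (π i) := by
  obtain ⟨e, v, he, hv, hstep⟩ := zigzag_succ_sub j
  have hwin : ∑ i ∈ window k j, (ε i * a (π i)) • o i = A • e • v := by
    rw [sum_window hk, hhit, hhit, ← smul_sub, Fin.val_succ, Fin.val_castSucc, hstep]
  calc A = |(A • e • v).1| + |(A • e • v).2| := by
        rcases he with rfl | rfl <;> rcases hv with rfl | rfl <;> simp [abs_of_pos hA]
    _ ≤ ∑ i ∈ window k j, |ε i * a (π i)| := hwin ▸ abs_fst_add_abs_snd_sum_smul_le _ _ ho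
    _ = ∑ i ∈ window k j, a (π i) := sum_congr rfl fun i _ => by
        rcases hε i with h | h <;> simp [h, abs_of_pos (hapos _)]

theorem exists_finpartition_of_path (hA : 0 < A) (h4 : ∀ i, 4 * a i > A) (h2 : ∀ i, 2 * a i < A)
    (hsum : ∑ i, a i = m * A) {δ : ℝ} (hδ : δ < 1 / 2)
    {x : ℝ × ℝ} {π : Equiv.Perm (Fin (3 * m))} {ε : Fin (3 * m) → ℤ} {o : Fin (3 * m) → ℤ × ℤ}
    {k : Fin (m + 1) → ℕ} (hε : ∀ i, ε i = 1 ∨ ε i = -1)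
    (ho : ∀ i, o i = (1, 0) ∨ o i = (0, 1)) (hk : Monotone k) (hk0 : k 0 = 0)
    (hkm : k (Fin.last m) = 3 * m)
    (hbox : ∀ j : Fin (m + 1),
      ‖x + toR (∑ i ∈ univ.filter (fun i : Fin (3 * m) => (i : ℕ) < k j),
          (ε i * a (π i)) • o i) - toR (A • zigzag j)‖ ≤ δ) :
    ∃ P : Finpartition (univ : Finset (Fin (3 * m))),
      #P.parts = m ∧ ∀ q ∈ P.parts, #q = 3 ∧ ∑ i ∈ q, a i = A := by
  have hapos : ∀ i, 0 < a i := fun i => by linarith [h4 i, h2 i]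
  have hge := le_sum_window_of_sum_filter_lt_eq_zigzag hA hapos hε ho hk
    (sum_filter_lt_eq_of_norm_le hδ hk0 (by simp) hbox)
  have htotal : ∑ j : Fin m, A = ∑ j, ∑ i ∈ window k j, a (π i) := by
    rw [← sum_biUnion fun u _ w _ huw => window_pairwiseDisjoint hk huw,
      eq_univ_of_forall fun i => mem_biUnion.2 <| by simpa using exists_mem_window hk0 hkm.ge i,
      Equiv.sum_comp π a, hsum]
    simp
  have hsumA : ∀ j, ∑ i ∈ window k j, a (π i) = A := fun j =>
    ((sum_eq_sum_iff_of_le fun j _ => hge j).1 htotal j (mem_univ j)).symm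
  have hcard : ∀ j, #(window k j) = 3 := fun j =>
    card_eq_three_of_sum_eq hA (fun i _ => h4 (π i)) (fun i _ => h2 (π i)) (hsumA j)
  obtain ⟨P, hPc, hP⟩ := exists_finpartition_of_cover (fun j => (window k j).map π.toEmbedding)
    (fun u w huw => (disjoint_map _).2 (window_pairwiseDisjoint hk huw))
    (fun j => by simp [← card_pos, hcard])
    (fun i => by simpa using exists_mem_window hk0 hkm.ge (π.symm i))
  refine ⟨P, by simpa using hPc, fun q hq => ?_⟩
  obtain ⟨j, rfl⟩ := hP q hq
  simp [hcard, hsumA]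

theorem exists_path_of_finpartition {δ : ℝ} (hδ0 : 0 ≤ δ)
    (P : Finpartition (univ : Finset (Fin (3 * m)))) (hPc : #P.parts = m)
    (hPq : ∀ q ∈ P.parts, #q = 3 ∧ ∑ i ∈ q, a i = A) :
    ∃ (x : ℝ × ℝ) (π : Equiv.Perm (Fin (3 * m))) (ε : Fin (3 * m) → ℤ)
        (o : Fin (3 * m) → ℤ × ℤ) (k : Fin (m + 1) → ℕ),
      (∀ i, ε i = 1 ∨ ε i = -1) ∧
      (∀ i, o i = (1, 0) ∨ o i = (0, 1)) ∧
      Monotone k ∧ k 0 = 0 ∧ k (Fin.last m) = 3 * m ∧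
      (∀ j : Fin (m + 1),
        ‖x + toR (∑ i ∈ Finset.univ.filter (fun i : Fin (3 * m) => (i : ℕ) < k j),
            (ε i * a (π i)) • o i) - toR (A • zigzag j)‖ ≤ δ) := by
  obtain ⟨c, hc⟩ := P.exists_fiber_mem_parts hPc
  let k : Fin (m + 1) → ℕ := fun j => 3 * j
  have hk : Monotone k := fun u w h => Nat.mul_le_mul_left 3 h
  let d : Fin (3 * m) → Fin m := fun i => ⟨i / 3, by omega⟩
  have hd : ∀ j, univ.filter (fun i => d i = j) = window k j := fun j => by
    ext i
    simp only [mem_filter, mem_univ, true_and, mem_window, Fin.ext_iff, d, k, Fin.val_succ,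
      Fin.val_castSucc]
    omega
  -- `π` lays out the `j`-th part of `P` as the steps `3j, 3j + 1, 3j + 2`.
  obtain ⟨π, hπ⟩ := exists_perm_comp_eq_of_card_fiber (f := d) (g := c) fun j => by
    rw [hd, card_window hk, (hPq _ (hc j)).1]
    simp only [k, Fin.val_succ, Fin.val_castSucc]
    omega
  choose E O hE hO hEO using zigzag_succ_sub
  have hwin : ∀ j : Fin m, ∑ i ∈ window k j, (E (d i) * a (π i)) • O (d i) =
      A • zigzag j.succ - A • zigzag j.castSucc := fun j => by
    have hdj : ∀ i ∈ window k j, d i = j := fun i hi => by rwa [← hd, mem_filter_univ] at hi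
    have hsum : ∑ i ∈ window k j, a (π i) = A := by
      rw [← (hPq _ (hc j)).2]
      refine sum_equiv π (fun i => ?_) fun _ _ => rfl
      rw [← hd, mem_filter_univ, mem_filter_univ, hπ]
    calc ∑ i ∈ window k j, (E (d i) * a (π i)) • O (d i)
        = ∑ i ∈ window k j, (E j * a (π i)) • O j := sum_congr rfl fun i hi => by rw [hdj i hi]
      _ = (E j * A) • O j := by rw [← sum_smul, ← mul_sum, hsum]
      _ = _ := by rw [mul_comm, mul_smul, Fin.val_succ, Fin.val_castSucc, ← hEO, smul_sub]
  refine ⟨0, π, fun i => E (d i), fun i => O (d i), k, fun i => hE _, fun i => hO _, hk, rfl,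
    by simp [k], fun j => ?_⟩
  rw [sum_filter_lt_eq_of_sum_window hk _ (q := fun j => A • zigzag j) (by simp [k]) hwin j]
  simpa using hδ0

end reduction

theorem stmt_6_general (m : ℕ) (A : ℤ) (hA : 0 < A)
    (a : Fin (3 * m) → ℤ)
    (h4 : ∀ i, 4 * a i > A) (h2 : ∀ i, 2 * a i < A)
    (hsum : ∑ i, a i = (m : ℤ) * A)
    (δ : ℝ) (hδ0 : 0 ≤ δ) (hδ : δ < 1 / 2)
    (p : ℕ → ℤ × ℤ)
    (hp : ∀ j, p j = (((j / 2 : ℕ) : ℤ) * A, (((j + 1) / 2 % 2 : ℕ) : ℤ) * A)) :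
    (∃ (x : ℝ × ℝ) (π : Equiv.Perm (Fin (3 * m))) (ε : Fin (3 * m) → ℤ)
        (o : Fin (3 * m) → ℤ × ℤ) (k : Fin (m + 1) → ℕ),
      (∀ i, ε i = 1 ∨ ε i = -1) ∧
      (∀ i, o i = (1, 0) ∨ o i = (0, 1)) ∧
      Monotone k ∧ k 0 = 0 ∧ k (Fin.last m) = 3 * m ∧
      (∀ j : Fin (m + 1),
        ‖x + toR (∑ i ∈ Finset.univ.filter (fun i : Fin (3 * m) => (i : ℕ) < k j),
            (ε i * a (π i)) • o i) - toR (p (j : ℕ))‖ ≤ δ)) ↔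
    (∃ P : Finpartition (Finset.univ : Finset (Fin (3 * m))),
      P.parts.card = m ∧ ∀ q ∈ P.parts, q.card = 3 ∧ ∑ i ∈ q, a i = A) := by
  obtain rfl : p = fun j => A • zigzag j := funext fun j => by
    rw [hp]
    ext <;> simp [zigzag, mul_comm]
  constructor
  · rintro ⟨x, π, ε, o, k, hε, ho, hk, hk0, hkm, hbox⟩
    exact exists_finpartition_of_path hA h4 h2 hsum hδ hε ho hk hk0 hkm hbox
  · rintro ⟨P, hPc, hPq⟩
    exact exists_path_of_finpartition hδ0 P hPc hPq

/-- DPA-S hardness reduction: given 3-Partition data, an axis-aligned path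
using each strut length `a i` exactly once that starts in the `δ`-box
(`δ < 1/2`, `ℓ∞`-norm) of `p 0` and visits the `δ`-boxes of the zigzag
polyline's turning points `p j = (⌊j/2⌋·A, (⌈j/2⌉ mod 2)·A)` in order
exists iff `Fin (3m)` can be partitioned into `m` three-element sets each
with `a`-sum `A`. (Steps are indexed 0-based: the node after the first `t`
steps is `x` plus the sum of the steps with index `< t`.) -/
theorem stmt_6 (m : ℕ) (hm : 0 < m) (A : ℤ) (hA : 0 < A)
    (a : Fin (3 * m) → ℤ)
    (h4 : ∀ i, 4 * a i > A) (h2 : ∀ i, 2 * a i < A)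
    (hsum : ∑ i, a i = (m : ℤ) * A)
    (δ : ℝ) (hδ0 : 0 ≤ δ) (hδ : δ < 1 / 2)
    (p : ℕ → ℤ × ℤ)
    (hp : ∀ j, p j = (((j / 2 : ℕ) : ℤ) * A, (((j + 1) / 2 % 2 : ℕ) : ℤ) * A)) :
    (∃ (x : ℝ × ℝ) (π : Equiv.Perm (Fin (3 * m))) (ε : Fin (3 * m) → ℤ)
        (o : Fin (3 * m) → ℤ × ℤ) (k : Fin (m + 1) → ℕ),
      (∀ i, ε i = 1 ∨ ε i = -1) ∧
      (∀ i, o i = (1, 0) ∨ o i = (0, 1)) ∧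
      Monotone k ∧ k 0 = 0 ∧ k (Fin.last m) = 3 * m ∧
      (∀ j : Fin (m + 1),
        ‖x + toR (∑ i ∈ Finset.univ.filter (fun i : Fin (3 * m) => (i : ℕ) < k j),
            (ε i * a (π i)) • o i) - toR (p (j : ℕ))‖ ≤ δ)) ↔
    (∃ P : Finpartition (Finset.univ : Finset (Fin (3 * m))),
      P.parts.card = m ∧ ∀ q ∈ P.parts, q.card = 3 ∧ ∑ i ∈ q, a i = A) :=
  stmt_6_general m A hA a h4 h2 hsum δ hδ0 hδ p hp
end
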